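/- Let f be a probability generating function with 0 < f'(1) < ∞ and let δ ∈ (0,1). If ∫₀^∞ v^{−2−δ}·(f(e^{−v}) − 1 + f'(1)(1 − e^{−v})) dv < ∞, then the random variable ξ with generating function f satisfies E[ξ^{1+δ}] < ∞, and conversely. -/

import Mathlib

/-!
Write `φₙ(v) = e^{-vn} - 1 + n(1 - e^{-v})` (`laplaceDefect n v`), so that the integrand is
`v^{-2-δ} E[φ_ξ(v)]`. Bernoulli's inequality gives `φₙ ≥ 0`, so by Tonelli the integral equals
`E[H(ξ)]` with `H(n) = ∫₀^∞ v^{-2-δ} φₙ(v) dv` (`defectLIntegral δ n`). The bounds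
`φₙ(v) ≤ (nv)²` for `v ≤ 1/n`, `φₙ(v) ≤ nv`, and `φₙ ≥ 1` on `[4/n, 5/n]` for `n ≥ 5` make `H(n)`
comparable to `n^{1+δ}`.
-/

open MeasureTheory Real Set
open scoped ENNReal

noncomputable def laplaceDefect (n : ℕ) (v : ℝ) : ℝ :=
  exp (-v * n) - 1 + n * (1 - exp (-v))

lemma laplaceDefect_nonneg (n : ℕ) (v : ℝ) : 0 ≤ laplaceDefect n v := by
  have hexp : exp (-v * n) = (1 + (exp (-v) - 1)) ^ n := by
    rw [add_sub_cancel, ← exp_nat_mul, mul_comm]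
  have hbernoulli := one_add_mul_le_pow (a := exp (-v) - 1) (by linarith [exp_pos (-v)]) n
  rw [laplaceDefect, hexp]
  linarith

lemma laplaceDefect_le_mul {v : ℝ} (hv : 0 ≤ v) (n : ℕ) : laplaceDefect n v ≤ n * v := by
  have h1 : exp (-v * n) ≤ 1 := exp_le_one_iff.mpr (by nlinarith [n.cast_nonneg (α := ℝ)])
  have h2 : 1 - exp (-v) ≤ v := by linarith [one_sub_le_exp_neg v]
  rw [laplaceDefect]
  nlinarith [n.cast_nonneg (α := ℝ)]

lemma laplaceDefect_le_sq {v : ℝ} {n : ℕ} (hv : 0 ≤ v) (hnv : n * v ≤ 1) :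
    laplaceDefect n v ≤ (n * v) ^ 2 := by
  have hnv0 : 0 ≤ n * v := by positivity
  have htaylor := abs_exp_sub_one_sub_id_le (x := -(n * v))
    (by rw [abs_neg, abs_of_nonneg hnv0]; exact hnv)
  have h2 : 1 - exp (-v) ≤ v := by linarith [one_sub_le_exp_neg v]
  rw [laplaceDefect, show -v * n = -(n * v) by ring]
  nlinarith [(abs_le.mp htaylor).2, n.cast_nonneg (α := ℝ)]

lemma one_le_laplaceDefect {v : ℝ} {n : ℕ} (hv : v ≤ 1) (hnv : 4 ≤ n * v) :
    1 ≤ laplaceDefect n v := by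
  have hv0 : 0 < v := by
    by_contra! h
    nlinarith [n.cast_nonneg (α := ℝ)]
  have hexp : exp (-v) ≤ 1 - v / 2 := by
    rw [exp_neg, inv_le_iff_one_le_mul₀ (exp_pos v)]
    nlinarith [add_one_le_exp v]
  rw [laplaceDefect]
  nlinarith [exp_pos (-v * n)]

lemma setLIntegral_Ioc_rpow {a r : ℝ} (ha : 0 ≤ a) (hr : -1 < r) :
    ∫⁻ v in Ioc 0 a, ENNReal.ofReal (v ^ r) = ENNReal.ofReal (a ^ (r + 1) / (r + 1)) := by
  have hint : IntegrableOn (fun v : ℝ => v ^ r) (Ioc 0 a) := by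
    rw [← intervalIntegrable_iff_integrableOn_Ioc_of_le ha]
    exact intervalIntegral.intervalIntegrable_rpow' hr
  rw [← ofReal_integral_eq_lintegral_ofReal hint
    ((ae_restrict_mem measurableSet_Ioc).mono fun v hv => rpow_nonneg hv.1.le r),
    ← intervalIntegral.integral_of_le ha, integral_rpow (Or.inl hr),
    zero_rpow (by linarith), sub_zero]

lemma setLIntegral_Ioi_rpow {a r : ℝ} (ha : 0 < a) (hr : r < -1) :
    ∫⁻ v in Ioi a, ENNReal.ofReal (v ^ r) = ENNReal.ofReal (-a ^ (r + 1) / (r + 1)) := by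
  rw [← ofReal_integral_eq_lintegral_ofReal (integrableOn_Ioi_rpow_of_lt hr ha)
    ((ae_restrict_mem measurableSet_Ioi).mono fun v hv => rpow_nonneg (ha.trans hv).le r),
    integral_Ioi_rpow_of_lt hr ha]

noncomputable def defectLIntegral (δ : ℝ) (n : ℕ) : ℝ≥0∞ :=
  ∫⁻ v in Ioi 0, ENNReal.ofReal (v ^ (-2 - δ) * laplaceDefect n v)

lemma defectLIntegral_le {δ : ℝ} (hδ₀ : 0 < δ) (hδ₁ : δ < 1) (n : ℕ) :
    defectLIntegral δ n ≤ ENNReal.ofReal ((1 / (1 - δ) + 1 / δ) * n ^ (1 + δ)) := by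
  rcases n.eq_zero_or_pos with rfl | hn
  · simp [defectLIntegral, laplaceDefect]
  have hn₀ : (0 : ℝ) < n := by exact_mod_cast hn
  have ha : 0 < (n : ℝ)⁻¹ := inv_pos.mpr hn₀
  have hinv_rpow (s : ℝ) : (n⁻¹ : ℝ) ^ s = n ^ (-s) := by
    rw [inv_rpow hn₀.le, rpow_neg hn₀.le]
  have hnear : ∫⁻ v in Ioc 0 (n : ℝ)⁻¹, ENNReal.ofReal (v ^ (-2 - δ) * laplaceDefect n v)
      ≤ ENNReal.ofReal (n ^ (1 + δ) / (1 - δ)) := by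
    calc ∫⁻ v in Ioc 0 (n : ℝ)⁻¹, ENNReal.ofReal (v ^ (-2 - δ) * laplaceDefect n v)
        ≤ ∫⁻ v in Ioc 0 (n : ℝ)⁻¹, ENNReal.ofReal (n ^ 2) * ENNReal.ofReal (v ^ (-δ)) := by
          refine setLIntegral_mono' measurableSet_Ioc fun v hv => ?_
          have hnv : n * v ≤ 1 := by rw [← mul_inv_cancel₀ hn₀.ne']; gcongr; exact hv.2
          rw [← ENNReal.ofReal_mul (by positivity)]
          apply ENNReal.ofReal_le_ofReal
          calc v ^ (-2 - δ) * laplaceDefect n v ≤ v ^ (-2 - δ) * (n * v) ^ 2 :=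
                mul_le_mul_of_nonneg_left (laplaceDefect_le_sq hv.1.le hnv) (rpow_nonneg hv.1.le _)
            _ = n ^ 2 * v ^ (-δ) := by
                rw [mul_pow, ← rpow_two v, mul_left_comm, ← rpow_add hv.1]
                ring_nf
      _ = ENNReal.ofReal (n ^ (1 + δ) / (1 - δ)) := by
          rw [lintegral_const_mul' _ _ ENNReal.ofReal_ne_top,
            setLIntegral_Ioc_rpow ha.le (by linarith), ← ENNReal.ofReal_mul (by positivity),
            hinv_rpow, ← rpow_two, mul_div_assoc', ← rpow_add hn₀]
          ring_nf
  have hfar : ∫⁻ v in Ioi (n : ℝ)⁻¹, ENNReal.ofReal (v ^ (-2 - δ) * laplaceDefect n v)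
      ≤ ENNReal.ofReal (n ^ (1 + δ) / δ) := by
    calc ∫⁻ v in Ioi (n : ℝ)⁻¹, ENNReal.ofReal (v ^ (-2 - δ) * laplaceDefect n v)
        ≤ ∫⁻ v in Ioi (n : ℝ)⁻¹, ENNReal.ofReal n * ENNReal.ofReal (v ^ (-1 - δ)) := by
          refine setLIntegral_mono' measurableSet_Ioi fun v hv => ?_
          have hv₀ : 0 < v := ha.trans hv
          rw [← ENNReal.ofReal_mul (by positivity)]
          apply ENNReal.ofReal_le_ofReal
          calc v ^ (-2 - δ) * laplaceDefect n v ≤ v ^ (-2 - δ) * (n * v) :=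
                mul_le_mul_of_nonneg_left (laplaceDefect_le_mul hv₀.le n) (by positivity)
            _ = n * v ^ (-1 - δ) := by
                rw [mul_left_comm, ← rpow_add_one hv₀.ne']
                ring_nf
      _ = ENNReal.ofReal (n ^ (1 + δ) / δ) := by
          rw [lintegral_const_mul' _ _ ENNReal.ofReal_ne_top,
            setLIntegral_Ioi_rpow ha (by linarith), ← ENNReal.ofReal_mul (by positivity),
            hinv_rpow, show -1 - δ + 1 = -δ by ring, neg_neg, neg_div_neg_eq, rpow_add hn₀,
            rpow_one, mul_div_assoc]
  calc defectLIntegral δ n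
      = (∫⁻ v in Ioc 0 (n : ℝ)⁻¹, ENNReal.ofReal (v ^ (-2 - δ) * laplaceDefect n v)) +
          ∫⁻ v in Ioi (n : ℝ)⁻¹, ENNReal.ofReal (v ^ (-2 - δ) * laplaceDefect n v) := by
        rw [defectLIntegral, ← Ioc_union_Ioi_eq_Ioi ha.le,
          lintegral_union measurableSet_Ioi (Ioc_disjoint_Ioi le_rfl)]
    _ ≤ ENNReal.ofReal (n ^ (1 + δ) / (1 - δ)) + ENNReal.ofReal (n ^ (1 + δ) / δ) :=
        add_le_add hnear hfar
    _ = ENNReal.ofReal ((1 / (1 - δ) + 1 / δ) * n ^ (1 + δ)) := by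
        rw [← ENNReal.ofReal_add (div_nonneg (by positivity) (by linarith)) (by positivity)]
        ring_nf

lemma defectLIntegral_ge {δ : ℝ} (hδ : -2 ≤ δ) {n : ℕ} (hn : 5 ≤ n) :
    ENNReal.ofReal (n ^ (1 + δ) / 5 ^ (2 + δ)) ≤ defectLIntegral δ n := by
  have hn₀ : (0 : ℝ) < n := by positivity
  have hn₅ : (5 : ℝ) ≤ n := by exact_mod_cast hn
  have hsub : Ioc (4 / (n : ℝ)) (5 / n) ⊆ Ioi 0 := fun v hv => lt_trans (by positivity) hv.1
  have hbound : ∀ v ∈ Ioc (4 / (n : ℝ)) (5 / n),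
      ENNReal.ofReal ((5 / n) ^ (-2 - δ)) ≤
        ENNReal.ofReal (v ^ (-2 - δ) * laplaceDefect n v) := by
    intro v ⟨hv₄, hv₅⟩
    have hv₀ : 0 < v := lt_trans (by positivity) hv₄
    have hdefect : 1 ≤ laplaceDefect n v := by
      apply one_le_laplaceDefect (hv₅.trans ((div_le_one hn₀).mpr hn₅))
      rw [div_lt_iff₀ hn₀] at hv₄
      linarith
    apply ENNReal.ofReal_le_ofReal
    calc (5 / n : ℝ) ^ (-2 - δ) ≤ v ^ (-2 - δ) := rpow_le_rpow_of_nonpos hv₀ hv₅ (by linarith)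
      _ ≤ v ^ (-2 - δ) * laplaceDefect n v :=
        le_mul_of_one_le_right (rpow_nonneg hv₀.le _) hdefect
  calc ENNReal.ofReal (n ^ (1 + δ) / 5 ^ (2 + δ))
      = ENNReal.ofReal ((5 / n) ^ (-2 - δ)) * volume (Ioc (4 / (n : ℝ)) (5 / n)) := by
        rw [Real.volume_Ioc, ← ENNReal.ofReal_mul (by positivity),
          show (5 : ℝ) / n - 4 / n = (n : ℝ)⁻¹ by ring,
          show -2 - δ = -(2 + δ) by ring, rpow_neg (by positivity), div_rpow (by norm_num) hn₀.le,
          inv_div, show 2 + δ = (1 + δ) + 1 by ring, rpow_add_one hn₀.ne']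
        field_simp
    _ = ∫⁻ _ in Ioc (4 / (n : ℝ)) (5 / n), ENNReal.ofReal ((5 / n) ^ (-2 - δ)) :=
        (setLIntegral_const _ _).symm
    _ ≤ ∫⁻ v in Ioc (4 / (n : ℝ)) (5 / n), ENNReal.ofReal (v ^ (-2 - δ) * laplaceDefect n v) :=
        setLIntegral_mono' measurableSet_Ioc hbound
    _ ≤ defectLIntegral δ n := lintegral_mono_set hsub

lemma rpow_le_defectLIntegral {δ : ℝ} (hδ : -1 ≤ δ) (n : ℕ) :
    ENNReal.ofReal (n ^ (1 + δ)) ≤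
      ENNReal.ofReal (5 ^ (2 + δ)) * defectLIntegral δ n + ENNReal.ofReal (5 ^ (1 + δ)) := by
  rcases le_or_gt 5 n with hn | hn
  · refine le_add_right ?_
    calc ENNReal.ofReal (n ^ (1 + δ))
        = ENNReal.ofReal (5 ^ (2 + δ)) * ENNReal.ofReal (n ^ (1 + δ) / 5 ^ (2 + δ)) := by
          rw [← ENNReal.ofReal_mul (by positivity), mul_div_cancel₀ _ (by positivity)]
      _ ≤ _ := by gcongr; exact defectLIntegral_ge (by linarith) hn
  · refine le_add_left (ENNReal.ofReal_le_ofReal ?_)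
    exact rpow_le_rpow (by positivity) (by exact_mod_cast hn.le) (by linarith)

section Moments

variable {Ω : Type*} [MeasurableSpace Ω] {μ : Measure Ω} {ξ : Ω → ℕ}

lemma integrable_exp_neg_mul [IsFiniteMeasure μ] (hint : Integrable (fun ω => (ξ ω : ℝ)) μ)
    {v : ℝ} (hv : 0 ≤ v) : Integrable (fun ω => exp (-v * ξ ω)) μ := by
  refine (integrable_const (1 : ℝ)).mono'
    (continuous_exp.comp_aestronglyMeasurable (hint.aestronglyMeasurable.const_mul (-v))) ?_
  refine .of_forall fun ω => ?_
  rw [norm_of_nonneg (exp_pos _).le, exp_le_one_iff]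
  nlinarith [(ξ ω).cast_nonneg (α := ℝ)]

lemma integrable_laplaceDefect [IsFiniteMeasure μ] (hint : Integrable (fun ω => (ξ ω : ℝ)) μ)
    {v : ℝ} (hv : 0 ≤ v) : Integrable (fun ω => laplaceDefect (ξ ω) v) μ :=
  ((integrable_exp_neg_mul hint hv).sub (integrable_const 1)).add (hint.mul_const _)

lemma integral_laplaceDefect [IsProbabilityMeasure μ] (hint : Integrable (fun ω => (ξ ω : ℝ)) μ)
    {v : ℝ} (hv : 0 ≤ v) :
    ∫ ω, laplaceDefect (ξ ω) v ∂μ =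
      (∫ ω, exp (-v * ξ ω) ∂μ) - 1 + (∫ ω, (ξ ω : ℝ) ∂μ) * (1 - exp (-v)) := by
  have hexp := integrable_exp_neg_mul hint hv
  have hexp_sub : Integrable (fun ω => exp (-v * ξ ω) - 1) μ := hexp.sub (integrable_const 1)
  simp only [laplaceDefect]
  rw [integral_add hexp_sub (hint.mul_const _),
    integral_sub hexp (integrable_const 1), integral_mul_const, integral_const, probReal_univ,
    one_smul]

lemma lintegral_defectLIntegral [IsProbabilityMeasure μ] (hξ : Measurable ξ)
    (hint : Integrable (fun ω => (ξ ω : ℝ)) μ) (δ : ℝ) :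
    ∫⁻ ω, defectLIntegral δ (ξ ω) ∂μ =
      ∫⁻ v in Ioi 0, ENNReal.ofReal (v ^ (-2 - δ) *
        ((∫ ω, exp (-v * ξ ω) ∂μ) - 1 + (∫ ω, (ξ ω : ℝ) ∂μ) * (1 - exp (-v)))) := by
  have hmeas : Measurable (Function.uncurry fun ω v =>
      ENNReal.ofReal (v ^ (-2 - δ) * laplaceDefect (ξ ω) v)) := by
    unfold laplaceDefect
    fun_prop
  simp only [defectLIntegral]
  rw [lintegral_lintegral_swap hmeas.aemeasurable]
  refine setLIntegral_congr_fun measurableSet_Ioi fun v (hv : 0 < v) => ?_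
  rw [← integral_laplaceDefect hint hv.le, ENNReal.ofReal_mul (rpow_nonneg hv.le _),
    ofReal_integral_eq_lintegral_ofReal (integrable_laplaceDefect hint hv.le)
      (.of_forall fun ω => laplaceDefect_nonneg _ v),
    ← lintegral_const_mul' _ _ ENNReal.ofReal_ne_top]
  simp only [← ENNReal.ofReal_mul (rpow_nonneg hv.le _)]

lemma integrableOn_Ioi_iff_lintegral_defectLIntegral_ne_top [IsProbabilityMeasure μ]
    (hξ : Measurable ξ) (hint : Integrable (fun ω => (ξ ω : ℝ)) μ) (δ : ℝ) :
    IntegrableOn (fun v => v ^ (-2 - δ) *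
        ((∫ ω, exp (-v * ξ ω) ∂μ) - 1 + (∫ ω, (ξ ω : ℝ) ∂μ) * (1 - exp (-v)))) (Ioi 0) ↔
      ∫⁻ ω, defectLIntegral δ (ξ ω) ∂μ ≠ ∞ := by
  have hmeas : StronglyMeasurable fun v : ℝ => ∫ ω, exp (-v * ξ ω) ∂μ :=
    StronglyMeasurable.integral_prod_right (by fun_prop)
  have hnonneg : ∀ v ∈ Ioi (0 : ℝ), 0 ≤ v ^ (-2 - δ) *
      ((∫ ω, exp (-v * ξ ω) ∂μ) - 1 + (∫ ω, (ξ ω : ℝ) ∂μ) * (1 - exp (-v))) := fun v hv => by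
    rw [← integral_laplaceDefect hint (le_of_lt hv)]
    exact mul_nonneg (rpow_nonneg (le_of_lt hv) _)
      (integral_nonneg fun ω => laplaceDefect_nonneg _ v)
  rw [lintegral_defectLIntegral hξ hint δ, IntegrableOn,
    lintegral_ofReal_ne_top_iff_integrable _ ((ae_restrict_mem measurableSet_Ioi).mono hnonneg)]
  exact (by fun_prop : Measurable _).aestronglyMeasurable

lemma integrable_rpow_iff_lintegral_defectLIntegral_ne_top [IsFiniteMeasure μ]
    (hξ : Measurable ξ) {δ : ℝ} (hδ₀ : 0 < δ) (hδ₁ : δ < 1) :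
    Integrable (fun ω => (ξ ω : ℝ) ^ (1 + δ)) μ ↔ ∫⁻ ω, defectLIntegral δ (ξ ω) ∂μ ≠ ∞ := by
  have hmeas : Measurable fun ω => (ξ ω : ℝ) ^ (1 + δ) := by fun_prop
  rw [← lintegral_ofReal_ne_top_iff_integrable hmeas.aestronglyMeasurable
    (.of_forall fun ω => rpow_nonneg (ξ ω).cast_nonneg _)]
  have hC : 0 ≤ 1 / (1 - δ) + 1 / δ :=
    add_nonneg (one_div_nonneg.mpr (by linarith)) (one_div_nonneg.mpr hδ₀.le)
  constructor
  · intro hmoment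
    refine ne_top_of_le_ne_top
      (ENNReal.mul_ne_top (ENNReal.ofReal_ne_top (r := 1 / (1 - δ) + 1 / δ)) hmoment) ?_
    rw [← lintegral_const_mul' _ _ ENNReal.ofReal_ne_top]
    exact lintegral_mono fun ω => ENNReal.ofReal_mul hC ▸ defectLIntegral_le hδ₀ hδ₁ (ξ ω)
  · intro hdefect
    refine ne_top_of_le_ne_top ?_
      (lintegral_mono fun ω => rpow_le_defectLIntegral (by linarith) (ξ ω))
    rw [lintegral_add_right _ measurable_const, lintegral_const_mul' _ _ ENNReal.ofReal_ne_top,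
      lintegral_const]
    exact ENNReal.add_ne_top.mpr ⟨ENNReal.mul_ne_top ENNReal.ofReal_ne_top hdefect,
      ENNReal.mul_ne_top ENNReal.ofReal_ne_top (measure_ne_top μ univ)⟩

end Moments

theorem fractional_moment_iff_integral_general {Ω : Type*} [MeasurableSpace Ω] (μ : Measure Ω)
    [IsProbabilityMeasure μ] (ξ : Ω → ℕ) (hξ : Measurable ξ)
    (hint : Integrable (fun ω => (ξ ω : ℝ)) μ)
    (δ : ℝ) (hδ : δ ∈ Set.Ioo (0:ℝ) 1) :
    IntegrableOn (fun v => v ^ (-2 - δ) *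
        ((∫ ω, Real.exp (-v * (ξ ω : ℝ)) ∂μ) - 1 +
          (∫ ω, (ξ ω : ℝ) ∂μ) * (1 - Real.exp (-v)))) (Set.Ioi 0) volume ↔
      Integrable (fun ω => (ξ ω : ℝ) ^ (1 + δ)) μ :=
  (integrableOn_Ioi_iff_lintegral_defectLIntegral_ne_top hξ hint δ).trans
    (integrable_rpow_iff_lintegral_defectLIntegral_ne_top hξ hδ.1 hδ.2).symm

theorem fractional_moment_iff_integral {Ω : Type*} [MeasurableSpace Ω] (μ : Measure Ω)
    [IsProbabilityMeasure μ] (ξ : Ω → ℕ) (hξ : Measurable ξ)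
    (hint : Integrable (fun ω => (ξ ω : ℝ)) μ)
    (hmean : 0 < ∫ ω, (ξ ω : ℝ) ∂μ)
    (δ : ℝ) (hδ : δ ∈ Set.Ioo (0:ℝ) 1) :
    IntegrableOn (fun v => v ^ (-2 - δ) *
        ((∫ ω, Real.exp (-v * (ξ ω : ℝ)) ∂μ) - 1 +
          (∫ ω, (ξ ω : ℝ) ∂μ) * (1 - Real.exp (-v)))) (Set.Ioi 0) volume ↔
      Integrable (fun ω => (ξ ω : ℝ) ^ (1 + δ)) μ :=
  fractional_moment_iff_integral_general μ ξ hξ hint δ hδ
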